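/- arXiv:2207.01804 — 4 statements merged into one kernel-verified Lean document; each statement's English description precedes it below -/
import Mathlib

section
/- (Radial weighted decay estimate, d = 2 case.) Let γ > -1 and let f : ℝ² → ℝ be a C¹ radial function, f(x) = F(|x|), such that F(r) → 0 as r → ∞ and ∫₀^∞ |F'(s)|² (1+s²)^{γ+1} s ds = E² < ∞. Then for all R ≥ 1, |F(R)| ≤ C(γ) E · R^{-γ-1}, where C(γ) depends only on γ. -/
/-!
Since `F` vanishes at infinity, `F R = -∫_R^∞ F'`. Splitting `F' = (F' √w) · (√w)⁻¹` with
`w s = (1 + s²)^(γ+1) s`, Cauchy–Schwarz gives `|F R| ≤ E · (∫_R^∞ w⁻¹)^(1/2)` (the same splitting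
shows that `F'` is integrable on `(R, ∞)`, so the fundamental theorem of calculus applies), and
`w s ≥ s^(2γ+3)` gives `∫_R^∞ w⁻¹ ≤ R^(-2γ-2) / (2γ+2)`.
-/

open MeasureTheory Set Real Filter

section WeightedCauchySchwarz

variable {α : Type*} [MeasurableSpace α] {μ : Measure α} {g w : α → ℝ}

lemma memLp_two_mul_sqrt (hg : AEStronglyMeasurable g μ) (hw : AEMeasurable w μ)
    (hw_nonneg : ∀ᵐ x ∂μ, 0 ≤ w x) (hgw : Integrable (fun x => g x ^ 2 * w x) μ) :
    MemLp (fun x => g x * √(w x)) 2 μ := by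
  refine (memLp_two_iff_integrable_sq (hg.mul hw.sqrt.aestronglyMeasurable)).2 (hgw.congr ?_)
  filter_upwards [hw_nonneg] with x hx
  rw [Pi.mul_apply, mul_pow, sq_sqrt hx]

lemma memLp_two_inv_sqrt (hw : AEMeasurable w μ) (hw_nonneg : ∀ᵐ x ∂μ, 0 ≤ w x)
    (hw_inv : Integrable (fun x => (w x)⁻¹) μ) :
    MemLp (fun x => (√(w x))⁻¹) 2 μ := by
  refine (memLp_two_iff_integrable_sq hw.sqrt.inv.aestronglyMeasurable).2 (hw_inv.congr ?_)
  filter_upwards [hw_nonneg] with x hx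
  rw [Pi.inv_apply, inv_pow, sq_sqrt hx]

lemma mul_sqrt_mul_inv_sqrt {a b : ℝ} (hb : 0 < b) : a * √b * (√b)⁻¹ = a := by
  field_simp

theorem Integrable.of_sq_mul_weight (hg : AEStronglyMeasurable g μ)
    (hw : AEMeasurable w μ) (hw_pos : ∀ᵐ x ∂μ, 0 < w x)
    (hgw : Integrable (fun x => g x ^ 2 * w x) μ) (hw_inv : Integrable (fun x => (w x)⁻¹) μ) :
    Integrable g μ := by
  have hw_nonneg : ∀ᵐ x ∂μ, 0 ≤ w x := hw_pos.mono fun _ hx => hx.le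
  refine ((memLp_two_mul_sqrt hg hw hw_nonneg hgw).integrable_mul
    (memLp_two_inv_sqrt hw hw_nonneg hw_inv)).congr ?_
  filter_upwards [hw_pos] with x hx
  exact mul_sqrt_mul_inv_sqrt hx

theorem abs_integral_le_sqrt_mul_sqrt_of_weight (hg : AEStronglyMeasurable g μ)
    (hw : AEMeasurable w μ) (hw_pos : ∀ᵐ x ∂μ, 0 < w x)
    (hgw : Integrable (fun x => g x ^ 2 * w x) μ) (hw_inv : Integrable (fun x => (w x)⁻¹) μ) :
    |∫ x, g x ∂μ| ≤ √(∫ x, g x ^ 2 * w x ∂μ) * √(∫ x, (w x)⁻¹ ∂μ) := by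
  have hw_nonneg : ∀ᵐ x ∂μ, 0 ≤ w x := hw_pos.mono fun _ hx => hx.le
  have hu := memLp_two_mul_sqrt hg hw hw_nonneg hgw
  have hv := memLp_two_inv_sqrt hw hw_nonneg hw_inv
  have holder := integral_mul_norm_le_Lp_mul_Lq Real.HolderConjugate.two_two
    (by simpa using hu) (by simpa using hv)
  calc |∫ x, g x ∂μ| ≤ ∫ x, |g x| ∂μ := abs_integral_le_integral_abs
    _ = ∫ x, ‖g x * √(w x)‖ * ‖(√(w x))⁻¹‖ ∂μ := by
        refine integral_congr_ae ?_
        filter_upwards [hw_pos] with x hx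
        rw [← norm_mul, mul_sqrt_mul_inv_sqrt hx, Real.norm_eq_abs]
    _ ≤ _ := holder
    _ = √(∫ x, g x ^ 2 * w x ∂μ) * √(∫ x, (w x)⁻¹ ∂μ) := by
        rw [sqrt_eq_rpow, sqrt_eq_rpow]
        congr 2 <;> refine integral_congr_ae ?_ <;> filter_upwards [hw_nonneg] with x hx
        · rw [Real.rpow_two, Real.norm_eq_abs, sq_abs, mul_pow, sq_sqrt hx]
        · rw [Real.rpow_two, Real.norm_eq_abs, sq_abs, inv_pow, sq_sqrt hx]

end WeightedCauchySchwarz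

/-- The factor `s` is the Jacobian of polar coordinates on `ℝ²`. -/
noncomputable def radialWeight (γ s : ℝ) : ℝ := (1 + s ^ 2) ^ (γ + 1) * s

section RadialWeight

variable {γ : ℝ}

@[fun_prop]
lemma measurable_radialWeight : Measurable (radialWeight γ) := by
  unfold radialWeight; fun_prop

lemma radialWeight_pos {s : ℝ} (hs : 0 < s) : 0 < radialWeight γ s := by
  unfold radialWeight; positivity

lemma rpow_le_radialWeight (hγ : -1 < γ) {s : ℝ} (hs : 0 < s) :
    s ^ (2 * γ + 3) ≤ radialWeight γ s := by
  calc s ^ (2 * γ + 3) = (s ^ 2) ^ (γ + 1) * s := by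
        rw [← rpow_natCast, ← rpow_mul hs.le, ← rpow_add_one hs.ne']; ring_nf
    _ ≤ radialWeight γ s := by
        unfold radialWeight; gcongr <;> linarith

lemma inv_radialWeight_le (hγ : -1 < γ) {s : ℝ} (hs : 0 < s) :
    (radialWeight γ s)⁻¹ ≤ s ^ (-2 * γ - 3) := by
  calc (radialWeight γ s)⁻¹ ≤ (s ^ (2 * γ + 3))⁻¹ :=
        inv_anti₀ (rpow_pos_of_pos hs _) (rpow_le_radialWeight hγ hs)
    _ = s ^ (-2 * γ - 3) := by rw [← rpow_neg hs.le]; ring_nf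

lemma integrableOn_inv_radialWeight (hγ : -1 < γ) {R : ℝ} (hR : 0 < R) :
    IntegrableOn (fun s => (radialWeight γ s)⁻¹) (Ioi R) := by
  refine (integrableOn_Ioi_rpow_of_lt (a := -2 * γ - 3) (by linarith) hR).mono'
    measurable_radialWeight.inv.aestronglyMeasurable ?_
  filter_upwards [ae_restrict_mem measurableSet_Ioi] with s hs
  have hs0 : 0 < s := hR.trans hs
  rw [norm_inv, Real.norm_of_nonneg (radialWeight_pos hs0).le]
  exact inv_radialWeight_le hγ hs0

lemma integral_inv_radialWeight_le (hγ : -1 < γ) {R : ℝ} (hR : 0 < R) :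
    ∫ s in Ioi R, (radialWeight γ s)⁻¹ ≤ R ^ (-2 * γ - 2) / (2 * γ + 2) := by
  calc ∫ s in Ioi R, (radialWeight γ s)⁻¹ ≤ ∫ s in Ioi R, s ^ (-2 * γ - 3) :=
        setIntegral_mono_on (integrableOn_inv_radialWeight hγ hR)
          (integrableOn_Ioi_rpow_of_lt (by linarith) hR) measurableSet_Ioi
          fun s hs => inv_radialWeight_le hγ (hR.trans hs)
    _ = R ^ (-2 * γ - 2) / (2 * γ + 2) := by
        rw [integral_Ioi_rpow_of_lt (by linarith) hR, show -2 * γ - 3 + 1 = -(2 * γ + 2) by ring,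
          div_neg, neg_div, neg_neg, show -2 * γ - 2 = -(2 * γ + 2) by ring]

end RadialWeight

theorem abs_le_of_tendsto_zero_of_radialWeight {γ R : ℝ} (hγ : -1 < γ) (hR : 0 < R)
    {F F' : ℝ → ℝ} (hF : ∀ r, 0 < r → HasDerivAt F (F' r) r) (hlim : Tendsto F atTop (nhds 0))
    (hint : IntegrableOn (fun s => F' s ^ 2 * radialWeight γ s) (Ioi R)) :
    |F R| ≤ √(∫ s in Ioi R, F' s ^ 2 * radialWeight γ s) * (R ^ (-γ - 1) / √(2 * γ + 2)) := by
  have hF'_meas : AEStronglyMeasurable F' (volume.restrict (Ioi R)) := by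
    refine (measurable_deriv F).aestronglyMeasurable.congr ?_
    filter_upwards [ae_restrict_mem measurableSet_Ioi] with s hs
    exact (hF s (hR.trans hs)).deriv
  have hw_pos : ∀ᵐ s ∂volume.restrict (Ioi R), 0 < radialWeight γ s := by
    filter_upwards [ae_restrict_mem measurableSet_Ioi] with s hs
    exact radialWeight_pos (hR.trans hs)
  have hw_inv := integrableOn_inv_radialWeight hγ hR
  have hF'_int : IntegrableOn F' (Ioi R) :=
    Integrable.of_sq_mul_weight hF'_meas measurable_radialWeight.aemeasurable hw_pos hint hw_inv
  have ftc : ∫ s in Ioi R, F' s = 0 - F R :=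
    integral_Ioi_of_hasDerivAt_of_tendsto (hF R hR).continuousAt.continuousWithinAt
      (fun s hs => hF s (hR.trans hs)) hF'_int hlim
  calc |F R| = |∫ s in Ioi R, F' s| := by rw [ftc, zero_sub, abs_neg]
    _ ≤ √(∫ s in Ioi R, F' s ^ 2 * radialWeight γ s) * √(∫ s in Ioi R, (radialWeight γ s)⁻¹) :=
        abs_integral_le_sqrt_mul_sqrt_of_weight hF'_meas measurable_radialWeight.aemeasurable
          hw_pos hint hw_inv
    _ ≤ √(∫ s in Ioi R, F' s ^ 2 * radialWeight γ s) * √(R ^ (-2 * γ - 2) / (2 * γ + 2)) := by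
        gcongr; exact integral_inv_radialWeight_le hγ hR
    _ = √(∫ s in Ioi R, F' s ^ 2 * radialWeight γ s) * (R ^ (-γ - 1) / √(2 * γ + 2)) := by
        rw [sqrt_div' _ (by linarith), show -2 * γ - 2 = (-γ - 1) * 2 by ring, rpow_mul hR.le,
          rpow_two, sqrt_sq (rpow_nonneg hR.le _)]

/-- Radial weighted decay estimate (d = 2): if F → 0 at infinity and
∫₀^∞ |F'(s)|² (1+s²)^{γ+1} s ds = E² < ∞ with γ > -1, then
|F(R)| ≤ C(γ) E R^{-γ-1} for all R ≥ 1, with C depending only on γ. -/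
theorem stmt7 (γ : ℝ) (hγ : -1 < γ) :
    ∃ C > 0, ∀ F F' : ℝ → ℝ,
      (∀ r : ℝ, 0 < r → HasDerivAt F (F' r) r) →
      Filter.Tendsto F Filter.atTop (nhds 0) →
      IntegrableOn (fun s => (F' s) ^ 2 * (1 + s ^ 2) ^ (γ + 1) * s) (Set.Ioi 0) →
      ∀ E : ℝ, 0 ≤ E →
        (∫ s in Set.Ioi (0:ℝ), (F' s) ^ 2 * (1 + s ^ 2) ^ (γ + 1) * s) = E ^ 2 →
        ∀ R : ℝ, 1 ≤ R → |F R| ≤ C * E * R ^ (-γ - 1) := by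
  refine ⟨(√(2 * γ + 2))⁻¹, inv_pos.2 (sqrt_pos.2 (by linarith)), ?_⟩
  intro F F' hF hlim hint E hE hE2 R hR
  have hR0 : 0 < R := one_pos.trans_le hR
  -- after reassociation the integrand is `F' s ^ 2 * radialWeight γ s` up to unfolding
  simp only [mul_assoc] at hint hE2
  have hint_R : IntegrableOn (fun s => F' s ^ 2 * radialWeight γ s) (Ioi R) :=
    hint.mono_set (Ioi_subset_Ioi hR0.le)
  have energy_le : ∫ s in Ioi R, F' s ^ 2 * radialWeight γ s ≤ E ^ 2 := by
    rw [← hE2]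
    refine setIntegral_mono_set hint ?_ (Ioi_subset_Ioi hR0.le).eventuallyLE
    filter_upwards [ae_restrict_mem measurableSet_Ioi] with s hs
    exact mul_nonneg (sq_nonneg _) (radialWeight_pos hs).le
  calc |F R| ≤ √(∫ s in Ioi R, F' s ^ 2 * radialWeight γ s) * (R ^ (-γ - 1) / √(2 * γ + 2)) :=
        abs_le_of_tendsto_zero_of_radialWeight hγ hR0 hF hlim hint_R
    _ ≤ √(E ^ 2) * (R ^ (-γ - 1) / √(2 * γ + 2)) := by gcongr
    _ = (√(2 * γ + 2))⁻¹ * E * R ^ (-γ - 1) := by rw [sqrt_sq hE]; ring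
end

section
/- For a continuous radial function F supported in [1,∞) with |F(r)| ≤ C r^{-2}, any C² solution 𝒦 of 𝒦'' + 𝒦'/r + b F = 0 on (0,∞) with 𝒦' bounded near 0 satisfies |𝒦(r)| ≤ C' (1 + (log r)²) for all r ≥ 1. -/
/-!
The flux `r 𝒦'(r)` has derivative `-b r F(r) = O(1/r)` on `[1, ∞)`, so it grows at most like
`log r`; hence `|𝒦'(r)| ≤ (A + B log r) / r`, whose antiderivative is `A log r + B (log r)² / 2`.
Both integrations are comparisons of derivatives against an explicit barrier, so no
integrability of `F` or `𝒦'` is needed.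
-/

open Real

theorem norm_le_of_norm_deriv_le_deriv_boundary_Ici {E : Type*} [NormedAddCommGroup E]
    [NormedSpace ℝ E] {f f' : ℝ → E} {B B' : ℝ → ℝ} {a x : ℝ}
    (hf : ∀ y, a ≤ y → HasDerivAt f (f' y) y) (hB : ∀ y, a ≤ y → HasDerivAt B (B' y) y)
    (ha : ‖f a‖ ≤ B a) (bound : ∀ y, a ≤ y → ‖f' y‖ ≤ B' y) (hx : a ≤ x) : ‖f x‖ ≤ B x :=
  image_norm_le_of_norm_deriv_right_le_deriv_boundary' (b := x)
    (fun y hy => (hf y hy.1).continuousAt.continuousWithinAt)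
    (fun y hy => (hf y hy.1).hasDerivWithinAt) ha
    (fun y hy => (hB y hy.1).continuousAt.continuousWithinAt)
    (fun y hy => (hB y hy.1).hasDerivWithinAt) (fun y hy => bound y hy.1) ⟨hx, le_rfl⟩

theorem hasDerivAt_id_mul_of_radial_eq {u : ℝ → ℝ} {u' g s : ℝ} (hs : s ≠ 0)
    (hu : HasDerivAt u u' s) (h : u' + u s / s = g) :
    HasDerivAt (fun t => t * u t) (s * g) s := by
  refine ((hasDerivAt_id' s).mul hu).congr_deriv ?_
  rw [← h]
  field_simp
  ring

theorem abs_mul_deriv_le_log_of_radial_ode {b C : ℝ} {F K' K'' : ℝ → ℝ}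
    (hFdecay : ∀ r : ℝ, 1 ≤ r → |F r| ≤ C * r ^ (-2 : ℝ))
    (hK' : ∀ r : ℝ, 1 ≤ r → HasDerivAt K' (K'' r) r)
    (hode : ∀ r : ℝ, 1 ≤ r → K'' r + K' r / r + b * F r = 0) {r : ℝ} (hr : 1 ≤ r) :
    |r * K' r| ≤ |K' 1| + |b| * C * log r := by
  have hflux : ∀ s, 1 ≤ s → HasDerivAt (fun t => t * K' t) (s * -(b * F s)) s := fun s hs =>
    hasDerivAt_id_mul_of_radial_eq (by positivity) (hK' s hs) (by linarith [hode s hs])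
  have hlog : ∀ s, 1 ≤ s →
      HasDerivAt (fun t => |K' 1| + |b| * C * log t) (|b| * C * s⁻¹) s := fun s hs =>
    ((hasDerivAt_log (by positivity)).const_mul _).const_add _
  refine norm_le_of_norm_deriv_le_deriv_boundary_Ici hflux hlog (by simp) (fun s hs => ?_) hr
  have hs0 : 0 < s := by linarith
  have hF : s * |F s| ≤ C * s⁻¹ := by
    calc s * |F s| ≤ s * (C * s ^ (-2 : ℝ)) := by gcongr; exact hFdecay s hs
      _ = C * s⁻¹ := by
        rw [rpow_neg hs0.le, rpow_two]
        field_simp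
  calc ‖s * -(b * F s)‖ = |b| * (s * |F s|) := by
        rw [Real.norm_eq_abs, abs_mul, abs_neg, abs_mul, abs_of_pos hs0]
        ring
    _ ≤ |b| * (C * s⁻¹) := by gcongr
    _ = |b| * C * s⁻¹ := by ring

theorem abs_le_log_sq_of_abs_mul_deriv_le {K K' : ℝ → ℝ} {A B : ℝ}
    (hK : ∀ r : ℝ, 1 ≤ r → HasDerivAt K (K' r) r)
    (hK'bound : ∀ r : ℝ, 1 ≤ r → |r * K' r| ≤ A + B * log r) {r : ℝ} (hr : 1 ≤ r) :
    |K r| ≤ |K 1| + A * log r + B * log r ^ 2 / 2 := by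
  have hbarrier : ∀ s, 1 ≤ s → HasDerivAt (fun t => |K 1| + A * log t + B * log t ^ 2 / 2)
      ((A + B * log s) / s) s := by
    intro s hs
    have hlog := hasDerivAt_log (x := s) (by positivity)
    refine (((hlog.const_mul A).const_add |K 1|).add
      ((hlog.pow 2).const_mul B |>.div_const 2)).congr_deriv ?_
    field_simp
    ring
  refine norm_le_of_norm_deriv_le_deriv_boundary_Ici hK hbarrier (by simp) (fun s hs => ?_) hr
  have hs0 : 0 < s := by linarith
  have h := hK'bound s hs
  rw [abs_mul, abs_of_pos hs0] at h
  rw [Real.norm_eq_abs, le_div_iff₀ hs0]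
  linarith

theorem stmt9_general (b C : ℝ)
    (F : ℝ → ℝ)
    (hFdecay : ∀ r : ℝ, 1 ≤ r → |F r| ≤ C * r ^ (-2 : ℝ))
    (K K' K'' : ℝ → ℝ)
    (hK : ∀ r : ℝ, 0 < r → HasDerivAt K (K' r) r)
    (hK' : ∀ r : ℝ, 0 < r → HasDerivAt K' (K'' r) r)
    (hode : ∀ r : ℝ, 0 < r → K'' r + K' r / r + b * F r = 0) :
    ∃ C' > 0, ∀ r : ℝ, 1 ≤ r → |K r| ≤ C' * (1 + Real.log r ^ 2) := by
  have hC : 0 ≤ C := by simpa using (abs_nonneg _).trans (hFdecay 1 le_rfl)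
  have hflux : ∀ r : ℝ, 1 ≤ r → |r * K' r| ≤ |K' 1| + |b| * C * log r := fun r hr =>
    abs_mul_deriv_le_log_of_radial_ode hFdecay (fun s hs => hK' s (by linarith))
      (fun s hs => hode s (by linarith)) hr
  refine ⟨|K 1| + |K' 1| + |b| * C + 1, by positivity, fun r hr => ?_⟩
  have hL : 0 ≤ log r := log_nonneg hr
  have hKbound := abs_le_log_sq_of_abs_mul_deriv_le (fun s hs => hK s (by linarith)) hflux hr
  have hbC : 0 ≤ |b| * C := by positivity
  nlinarith [abs_nonneg (K 1), abs_nonneg (K' 1), sq_nonneg (log r - 1),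
    mul_nonneg (abs_nonneg (K 1)) (sq_nonneg (log r)), mul_nonneg hbC (sq_nonneg (log r)),
    mul_nonneg (abs_nonneg (K' 1)) (sq_nonneg (log r - 1))]

/-- Growth of the solution K of ΔK + b g_f = 0 when g_f ~ r^{-2}:
|K(r)| ≤ C' (1 + (log r)²) for r ≥ 1. -/
theorem stmt9 (b C : ℝ) (hC : 0 < C)
    (F : ℝ → ℝ) (hFcont : ContinuousOn F (Set.Ioi 0))
    (hFsupp : ∀ r : ℝ, 0 < r → r < 1 → F r = 0)
    (hFdecay : ∀ r : ℝ, 1 ≤ r → |F r| ≤ C * r ^ (-2 : ℝ))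
    (K K' K'' : ℝ → ℝ)
    (hK : ∀ r : ℝ, 0 < r → HasDerivAt K (K' r) r)
    (hK' : ∀ r : ℝ, 0 < r → HasDerivAt K' (K'' r) r)
    (hode : ∀ r : ℝ, 0 < r → K'' r + K' r / r + b * F r = 0)
    (hbdd : ∃ M : ℝ, ∀ r : ℝ, 0 < r → r ≤ 1 → |K' r| ≤ M) :
    ∃ C' > 0, ∀ r : ℝ, 1 ≤ r → |K r| ≤ C' * (1 + Real.log r ^ 2) :=
  stmt9_general b C F hFdecay K K' K'' hK hK' hode
end

section
/- No regular expansion of the frequency: suppose φ₁ : (0,∞) → ℝ is C², solves φ₁'' + φ₁'/r - g(r) = Ω₁ for all r > 0 with g continuous, g ≥ 0, g not identically zero, ∫₀^∞ g(r) r dr < ∞, φ₁' bounded near 0, and φ₁'(r) bounded as r → ∞. Then Ω₁ = 0. -/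
/-! Since `φ'' + φ'/r = (r φ')'/r`, the equation says `(r φ' - Ω₁ r²/2)' = g r · r`. The right side
is integrable on `(1, ∞)`, so `r φ' - Ω₁ r²/2` stays bounded there; as `r φ'` grows at most
linearly, the quadratic term must vanish. -/

open MeasureTheory Set

lemma abs_sub_le_integral_abs_of_hasDerivAt {f f' : ℝ → ℝ} {a b : ℝ} (hab : a ≤ b)
    (hf : ∀ x ∈ Icc a b, HasDerivAt f (f' x) x) (hint : IntegrableOn f' (Ioi a)) :
    |f b - f a| ≤ ∫ x in Ioi a, |f' x| := by
  have hii : IntervalIntegrable f' volume a b :=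
    (intervalIntegrable_iff_integrableOn_Ioc_of_le hab).mpr (hint.mono_set Ioc_subset_Ioi_self)
  rw [← intervalIntegral.integral_eq_sub_of_hasDerivAt (by rwa [uIcc_of_le hab]) hii]
  calc |∫ x in a..b, f' x| ≤ ∫ x in a..b, |f' x| := intervalIntegral.abs_integral_le_integral_abs hab
    _ = ∫ x in Ioc a b, |f' x| := intervalIntegral.integral_of_le hab
    _ ≤ ∫ x in Ioi a, |f' x| :=
      setIntegral_mono_set hint.abs (ae_of_all _ fun x => abs_nonneg _)
        Ioc_subset_Ioi_self.eventuallyLE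

lemma hasDerivAt_mul_deriv_sub_of_radial_eq {g φ' φ'' : ℝ → ℝ} {Ω r : ℝ} (hr : 0 < r)
    (hd : HasDerivAt φ' (φ'' r) r) (hode : φ'' r + φ' r / r - g r = Ω) :
    HasDerivAt (fun s => s * φ' s - Ω * s ^ 2 / 2) (g r * r) r := by
  refine (((hasDerivAt_id' r).mul hd).sub
    (((hasDerivAt_pow 2 r).const_mul Ω).div_const 2)).congr_deriv ?_
  rw [← hode]
  field_simp
  ring

lemma eq_zero_of_abs_mul_sq_le {c A B : ℝ} (h : ∀ r : ℝ, 1 ≤ r → |c * r ^ 2| ≤ A * r + B) :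
    c = 0 := by
  by_contra hc
  have hc' : 0 < |c| := abs_pos.mpr hc
  set r := max 1 ((|A| + |B|) / |c| + 1)
  have hr1 : 1 ≤ r := le_max_left _ _
  have hcr : |A| + |B| < |c| * r := by
    have := mul_le_mul_of_nonneg_left (le_max_right 1 ((|A| + |B|) / |c| + 1)) hc'.le
    rw [mul_add, mul_div_cancel₀ _ hc'.ne'] at this
    linarith
  have hbound := h r hr1
  rw [abs_mul, abs_of_nonneg (sq_nonneg r)] at hbound
  nlinarith [le_abs_self A, le_abs_self B, abs_nonneg B, abs_nonneg A]

theorem stmt13_general (g : ℝ → ℝ) (Ω₁ : ℝ)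
    (hgint : IntegrableOn (fun r => g r * r) (Set.Ioi 0))
    (φ' φ'' : ℝ → ℝ)
    (hd2 : ∀ r : ℝ, 0 < r → HasDerivAt φ' (φ'' r) r)
    (hode : ∀ r : ℝ, 0 < r → φ'' r + φ' r / r - g r = Ω₁)
    (hbddinf : ∃ M : ℝ, ∀ r : ℝ, 1 ≤ r → |φ' r| ≤ M) :
    Ω₁ = 0 := by
  obtain ⟨M, hM⟩ := hbddinf
  set χ : ℝ → ℝ := fun s => s * φ' s - Ω₁ * s ^ 2 / 2
  set C := ∫ x in Ioi 1, |g x * x|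
  have hχ : ∀ r : ℝ, 1 ≤ r → |χ r - χ 1| ≤ C := fun r hr =>
    abs_sub_le_integral_abs_of_hasDerivAt hr
      (fun x hx => hasDerivAt_mul_deriv_sub_of_radial_eq (by linarith [hx.1])
        (hd2 x (by linarith [hx.1])) (hode x (by linarith [hx.1])))
      (hgint.mono_set (Ioi_subset_Ioi zero_le_one))
  suffices Ω₁ / 2 = 0 by linarith
  refine eq_zero_of_abs_mul_sq_le (A := M) (B := |χ 1| + C) fun r hr => ?_
  have hlin : |r * φ' r| ≤ M * r := by
    rw [abs_mul, abs_of_pos (by linarith), mul_comm]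
    exact mul_le_mul_of_nonneg_right (hM r hr) (by linarith)
  calc |Ω₁ / 2 * r ^ 2| = |r * φ' r - (χ r - χ 1) - χ 1| := by congr 1; simp only [χ]; ring
    _ ≤ M * r + (|χ 1| + C) := by
      linarith [abs_sub (r * φ' r - (χ r - χ 1)) (χ 1), abs_sub (r * φ' r) (χ r - χ 1), hχ r hr]

/-- No regular expansion of the frequency: the solvability of
φ₁'' + φ₁'/r - g = Ω₁ with bounded derivative forces Ω₁ = 0. -/
theorem stmt13 (g : ℝ → ℝ) (Ω₁ : ℝ)
    (hgcont : ContinuousOn g (Set.Ioi 0))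
    (hgpos : ∀ r : ℝ, 0 < r → 0 ≤ g r)
    (hgne : ∃ r : ℝ, 0 < r ∧ g r ≠ 0)
    (hgint : IntegrableOn (fun r => g r * r) (Set.Ioi 0))
    (φ φ' φ'' : ℝ → ℝ)
    (hd1 : ∀ r : ℝ, 0 < r → HasDerivAt φ (φ' r) r)
    (hd2 : ∀ r : ℝ, 0 < r → HasDerivAt φ' (φ'' r) r)
    (hode : ∀ r : ℝ, 0 < r → φ'' r + φ' r / r - g r = Ω₁)
    (hbdd0 : ∃ M : ℝ, ∀ r : ℝ, 0 < r → r ≤ 1 → |φ' r| ≤ M)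
    (hbddinf : ∃ M : ℝ, ∀ r : ℝ, 1 ≤ r → |φ' r| ≤ M) :
    Ω₁ = 0 :=
  stmt13_general g Ω₁ hgint φ' φ'' hd2 hode hbddinf
end

section
/- Weighted L² bound for the resolvent away from the unit ball: let γ ∈ ℝ and define for f ∈ L² on (0,∞) with measure r dr, u(r) = (1/r)∫₀^r e^{s-r} f(s) s ds. Then there is C(γ) such that (∫₁^∞ |u(r)|² (1+r²)^γ r dr)^{1/2} ≤ C(γ) (∫₀^∞ |f(r)|² (1+r²)^γ r dr)^{1/2}. -/
/-!
Put `g(s) = |f(s)| ⟨s⟩^γ √s` with `⟨s⟩ = (1 + s²)^{1/2}`, so that the weighted norm of `f` is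
`‖g‖_{L²(0,∞)}`. Peetre's inequality `⟨r⟩^γ ≤ 2^{|γ|/2} ⟨r - s⟩^{|γ|} ⟨s⟩^γ` and `s / √r ≤ √s`
for `0 < s ≤ r` bound `|u(r)| ⟨r⟩^γ √r` by `2^{|γ|/2} (g ⋆ k)(r)`, where
`k(z) = e^{-z} ⟨z⟩^{|γ|} 1_{z ≥ 0}` is integrable; Young's inequality `‖g ⋆ k‖₂ ≤ ‖k‖₁ ‖g‖₂`
concludes. Working with lower Lebesgue integrals in `ℝ≥0∞` avoids all integrability side
conditions on `u`.
-/

open MeasureTheory Set Real Filter Asymptotics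
open scoped ENNReal

theorem one_add_sq_le_two_mul (a b : ℝ) : 1 + a ^ 2 ≤ 2 * (1 + (a - b) ^ 2) * (1 + b ^ 2) := by
  nlinarith [sq_nonneg (a - 2 * b), sq_nonneg ((a - b) * b)]

theorem one_add_sq_rpow_le (t a b : ℝ) :
    (1 + a ^ 2) ^ t ≤ 2 ^ |t| * (1 + (a - b) ^ 2) ^ |t| * (1 + b ^ 2) ^ t := by
  have ha : 0 < 1 + a ^ 2 := by positivity
  have hb : 0 < 1 + b ^ 2 := by positivity
  rcases le_or_gt 0 t with ht | ht
  · rw [abs_of_nonneg ht, ← mul_rpow (by norm_num) (by positivity),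
      ← mul_rpow (by positivity) hb.le]
    exact rpow_le_rpow ha.le (one_add_sq_le_two_mul a b) ht
  · have hba : (1 + b ^ 2) ^ |t| ≤ 2 ^ |t| * (1 + (a - b) ^ 2) ^ |t| * (1 + a ^ 2) ^ |t| := by
      rw [← mul_rpow (by norm_num) (by positivity), ← mul_rpow (by positivity) ha.le]
      refine rpow_le_rpow hb.le ?_ (abs_nonneg t)
      exact (one_add_sq_le_two_mul b a).trans_eq (by ring)
    rw [show t = -|t| by rw [abs_of_neg ht, neg_neg], rpow_neg ha.le, rpow_neg hb.le, abs_neg,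
      abs_abs, ← div_eq_mul_inv, le_div_iff₀ (by positivity)]
    calc ((1 + a ^ 2) ^ |t|)⁻¹ * (1 + b ^ 2) ^ |t|
        ≤ ((1 + a ^ 2) ^ |t|)⁻¹ * (2 ^ |t| * (1 + (a - b) ^ 2) ^ |t| * (1 + a ^ 2) ^ |t|) := by
          gcongr
      _ = 2 ^ |t| * (1 + (a - b) ^ 2) ^ |t| := by
          field_simp

theorem integrableOn_exp_neg_mul_one_add_sq_rpow {q : ℝ} (hq : 0 ≤ q) :
    IntegrableOn (fun z => exp (-z) * (1 + z ^ 2) ^ q) (Ioi 0) := by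
  refine integrable_of_isBigO_exp_neg (b := 1 / 2) (by norm_num) (by fun_prop) ?_
  have hpow : (fun z : ℝ => (1 + z ^ 2) ^ q) =O[atTop] fun z => z ^ (2 * q) := by
    refine IsBigO.of_bound (2 ^ q) ?_
    filter_upwards [eventually_ge_atTop 1] with z hz
    rw [norm_of_nonneg (by positivity), norm_of_nonneg (by positivity), rpow_mul (by linarith),
      ← mul_rpow (by norm_num) (by positivity), rpow_two]
    exact rpow_le_rpow (by positivity) (by nlinarith) hq
  have hdecay := (isBigO_refl (fun z : ℝ => exp (-z)) atTop).mul
    (hpow.trans (isLittleO_rpow_exp_pos_mul_atTop (2 * q) (b := 1 / 2) (by norm_num)).isBigO)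
  refine hdecay.congr_right fun z => ?_
  rw [← exp_add]
  ring_nf

theorem lintegral_mul_sq_le {α : Type*} [MeasurableSpace α] (μ : Measure α) {f w : α → ℝ≥0∞}
    (hf : AEMeasurable f μ) (hw : AEMeasurable w μ) :
    (∫⁻ a, f a * w a ∂μ) ^ 2 ≤ (∫⁻ a, w a ∂μ) * ∫⁻ a, f a ^ 2 * w a ∂μ := by
  have hsplit : ∀ a, f a * w a = w a ^ (1 / 2 : ℝ) * (f a ^ 2 * w a) ^ (1 / 2 : ℝ) := fun a => by
    rw [ENNReal.mul_rpow_of_nonneg _ _ (by norm_num), ← ENNReal.rpow_natCast, ← ENNReal.rpow_mul,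
      ← mul_assoc, mul_comm _ (f a ^ _), mul_assoc, ← ENNReal.rpow_add_of_nonneg _ _ (by norm_num)
      (by norm_num)]
    norm_num
  have hCS : ∫⁻ a, w a ^ (1 / 2 : ℝ) * (f a ^ 2 * w a) ^ (1 / 2 : ℝ) ∂μ ≤
      (∫⁻ a, w a ∂μ) ^ (1 / 2 : ℝ) * (∫⁻ a, f a ^ 2 * w a ∂μ) ^ (1 / 2 : ℝ) :=
    ENNReal.lintegral_mul_norm_pow_le hw ((hf.pow_const 2).mul hw) (by norm_num) (by norm_num)
      (by norm_num)
  calc (∫⁻ a, f a * w a ∂μ) ^ 2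
      ≤ ((∫⁻ a, w a ∂μ) ^ (1 / 2 : ℝ) * (∫⁻ a, f a ^ 2 * w a ∂μ) ^ (1 / 2 : ℝ)) ^ 2 := by
        rw [lintegral_congr hsplit]
        gcongr
    _ = (∫⁻ a, w a ∂μ) * ∫⁻ a, f a ^ 2 * w a ∂μ := by
        rw [mul_pow, ← ENNReal.rpow_natCast, ← ENNReal.rpow_natCast, ← ENNReal.rpow_mul,
          ← ENNReal.rpow_mul]
        norm_num

theorem lintegral_lconvolution_sq_le {G : Type*} [MeasurableSpace G] [AddGroup G]
    [MeasurableAdd₂ G] [MeasurableNeg G] {μ : Measure G} [SFinite μ] [μ.IsAddLeftInvariant]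
    [μ.IsAddRightInvariant] [μ.IsNegInvariant] {f k : G → ℝ≥0∞} (hf : Measurable f)
    (hk : Measurable k) :
    ∫⁻ x, (f ⋆ₗ[μ] k) x ^ 2 ∂μ ≤ (∫⁻ x, k x ∂μ) ^ 2 * ∫⁻ x, f x ^ 2 ∂μ := by
  have hF : Measurable fun p : G × G => f p.2 ^ 2 * k (-p.2 + p.1) := by fun_prop
  have hshift : ∀ x, ∫⁻ y, k (-y + x) ∂μ = ∫⁻ y, k y ∂μ := fun x =>
    (lintegral_neg_eq_self (fun y => k (y + x))).trans (lintegral_add_right_eq_self k x)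
  have hCS : ∀ x, (f ⋆ₗ[μ] k) x ^ 2 ≤ (∫⁻ y, k y ∂μ) * ∫⁻ y, f y ^ 2 * k (-y + x) ∂μ :=
    fun x => (lintegral_mul_sq_le μ (w := fun y => k (-y + x)) hf.aemeasurable
      (by fun_prop)).trans_eq (by rw [hshift])
  have hinner : ∀ y, ∫⁻ x, f y ^ 2 * k (-y + x) ∂μ = f y ^ 2 * ∫⁻ x, k x ∂μ := fun y => by
    rw [lintegral_const_mul _ (by fun_prop : Measurable fun x => k (-y + x)),
      lintegral_add_left_eq_self]
  calc ∫⁻ x, (f ⋆ₗ[μ] k) x ^ 2 ∂μ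
      ≤ ∫⁻ x, (∫⁻ y, k y ∂μ) * ∫⁻ y, f y ^ 2 * k (-y + x) ∂μ ∂μ := lintegral_mono hCS
    _ = (∫⁻ y, k y ∂μ) * ∫⁻ y, ∫⁻ x, f y ^ 2 * k (-y + x) ∂μ ∂μ := by
        rw [lintegral_const_mul _ hF.lintegral_prod_right',
          lintegral_lintegral_swap (f := fun x y => f y ^ 2 * k (-y + x)) hF.aemeasurable]
    _ = (∫⁻ x, k x ∂μ) ^ 2 * ∫⁻ x, f x ^ 2 ∂μ := by
        simp_rw [hinner]
        rw [lintegral_mul_const _ (hf.pow_const 2)]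
        ring

theorem sqrt_integral_le_mul_sqrt_integral {α β : Type*} [MeasurableSpace α] [MeasurableSpace β]
    {μ : Measure α} {ν : Measure β} {F : α → ℝ} {G : β → ℝ} (hF : 0 ≤ᵐ[μ] F) (hG : 0 ≤ᵐ[ν] G)
    (hGi : Integrable G ν) {c : ℝ} (hc : 0 ≤ c)
    (h : ∫⁻ a, ENNReal.ofReal (F a) ∂μ ≤ ENNReal.ofReal c ^ 2 * ∫⁻ b, ENNReal.ofReal (G b) ∂ν) :
    √(∫ a, F a ∂μ) ≤ c * √(∫ b, G b ∂ν) := by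
  by_cases hFi : Integrable F μ
  swap
  · rw [integral_undef hFi, sqrt_zero]
    positivity
  have hint : ∫ a, F a ∂μ ≤ c ^ 2 * ∫ b, G b ∂ν := by
    rw [← ENNReal.ofReal_le_ofReal_iff (mul_nonneg (sq_nonneg c) (integral_nonneg_of_ae hG)),
      ofReal_integral_eq_lintegral_ofReal hFi hF, ENNReal.ofReal_mul (sq_nonneg c),
      ENNReal.ofReal_pow hc, ofReal_integral_eq_lintegral_ofReal hGi hG]
    exact h
  calc √(∫ a, F a ∂μ) ≤ √(c ^ 2 * ∫ b, G b ∂ν) := sqrt_le_sqrt hint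
    _ = c * √(∫ b, G b ∂ν) := by rw [sqrt_mul (sq_nonneg c), sqrt_sq hc]

noncomputable def radialResolvent (f : ℝ → ℝ) (r : ℝ) : ℝ :=
  (1 / r) * ∫ s in (0:ℝ)..r, exp (s - r) * f s * s

noncomputable def resolventKernel (γ : ℝ) : ℝ → ℝ≥0∞ :=
  (Ici 0).indicator fun z => ENNReal.ofReal (exp (-z) * (1 + z ^ 2) ^ (|γ| / 2))

noncomputable def weightedProfile (γ : ℝ) (f : ℝ → ℝ) : ℝ → ℝ≥0∞ :=
  (Ioi 0).indicator fun s => ENNReal.ofReal (|f s| * (1 + s ^ 2) ^ (γ / 2) * √s)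

theorem measurable_resolventKernel (γ : ℝ) : Measurable (resolventKernel γ) :=
  Measurable.indicator (by fun_prop) measurableSet_Ici

theorem measurable_weightedProfile (γ : ℝ) {f : ℝ → ℝ} (hf : Measurable f) :
    Measurable (weightedProfile γ f) :=
  Measurable.indicator (by fun_prop) measurableSet_Ioi

theorem lintegral_resolventKernel_lt_top (γ : ℝ) : ∫⁻ z, resolventKernel γ z < ∞ := by
  rw [resolventKernel, lintegral_indicator measurableSet_Ici,
    setLIntegral_congr Ioi_ae_eq_Ici.symm]
  exact (integrableOn_exp_neg_mul_one_add_sq_rpow (by positivity)).setLIntegral_lt_top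

theorem lintegral_weightedProfile_sq (γ : ℝ) (f : ℝ → ℝ) :
    ∫⁻ s, weightedProfile γ f s ^ 2 =
      ∫⁻ s in Ioi 0, ENNReal.ofReal (f s ^ 2 * (1 + s ^ 2) ^ γ * s) := by
  rw [← lintegral_indicator measurableSet_Ioi]
  refine lintegral_congr fun s => ?_
  by_cases hs : s ∈ Ioi 0
  · rw [weightedProfile, indicator_of_mem hs, indicator_of_mem hs,
      ← ENNReal.ofReal_pow (by positivity), mul_pow, mul_pow, sq_abs, sq_sqrt (le_of_lt hs),
      ← rpow_two ((1 + s ^ 2) ^ (γ / 2)), ← rpow_mul (by positivity)]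
    norm_num
  · simp [weightedProfile, hs]

theorem exp_sub_mul_weight_le (γ : ℝ) {r s : ℝ} (hs : 0 < s) (hsr : s ≤ r) :
    exp (s - r) * s * ((1 + r ^ 2) ^ (γ / 2) / √r) ≤
      2 ^ (|γ| / 2) * (exp (-(r - s)) * (1 + (r - s) ^ 2) ^ (|γ| / 2)) *
        ((1 + s ^ 2) ^ (γ / 2) * √s) := by
  have hsqrt : s / √r ≤ √s := by
    rw [div_le_iff₀ (sqrt_pos.2 (hs.trans_le hsr))]
    calc s = √s * √s := (mul_self_sqrt hs.le).symm
      _ ≤ √s * √r := by gcongr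
  have hpeetre := one_add_sq_rpow_le (γ / 2) r s
  rw [abs_div, abs_two] at hpeetre
  calc exp (s - r) * s * ((1 + r ^ 2) ^ (γ / 2) / √r)
      = exp (s - r) * (1 + r ^ 2) ^ (γ / 2) * (s / √r) := by ring
    _ ≤ exp (s - r) * (2 ^ (|γ| / 2) * (1 + (r - s) ^ 2) ^ (|γ| / 2) * (1 + s ^ 2) ^ (γ / 2)) *
        √s := by gcongr
    _ = _ := by rw [neg_sub]; ring

theorem ofReal_radialResolvent_sq_le (γ : ℝ) (f : ℝ → ℝ) {r : ℝ} (hr : 0 < r) :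
    ENNReal.ofReal (radialResolvent f r ^ 2 * (1 + r ^ 2) ^ γ * r) ≤
      (ENNReal.ofReal (2 ^ (|γ| / 2)) * (weightedProfile γ f ⋆ₗ resolventKernel γ) r) ^ 2 := by
  rw [radialResolvent, intervalIntegral.integral_of_le hr.le]
  set I := ∫ s in Ioc 0 r, exp (s - r) * f s * s
  set W := (1 + r ^ 2) ^ (γ / 2) / √r
  have hW : ((1 / r) * I) ^ 2 * (1 + r ^ 2) ^ γ * r = (|I| * W) ^ 2 := by
    rw [mul_pow |I| W, sq_abs, div_pow, sq_sqrt hr.le, ← rpow_two ((1 + r ^ 2) ^ (γ / 2)),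
      ← rpow_mul (by positivity)]
    field_simp
  rw [hW, ENNReal.ofReal_pow (by positivity)]
  gcongr
  calc ENNReal.ofReal (|I| * W) = ‖I‖ₑ * ENNReal.ofReal W := by
        rw [ENNReal.ofReal_mul (abs_nonneg _), Real.enorm_eq_ofReal_abs]
    _ ≤ (∫⁻ s in Ioc 0 r, ‖exp (s - r) * f s * s‖ₑ) * ENNReal.ofReal W := by
        gcongr
        exact enorm_integral_le_lintegral_enorm _
    _ = ∫⁻ s in Ioc 0 r, ENNReal.ofReal (|exp (s - r) * f s * s| * W) := by
        rw [← lintegral_mul_const' _ _ ENNReal.ofReal_ne_top]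
        refine lintegral_congr fun s => ?_
        rw [Real.enorm_eq_ofReal_abs, ENNReal.ofReal_mul (abs_nonneg _)]
    _ ≤ ∫⁻ s in Ioc 0 r, ENNReal.ofReal (2 ^ (|γ| / 2)) *
          (weightedProfile γ f s * resolventKernel γ (-s + r)) := by
        refine setLIntegral_mono' measurableSet_Ioc fun s ⟨hs, hsr⟩ => ?_
        rw [weightedProfile, resolventKernel, indicator_of_mem (show s ∈ Ioi 0 from hs),
          indicator_of_mem (show -s + r ∈ Ici 0 by simpa [neg_add_eq_sub] using hsr),
          ← ENNReal.ofReal_mul (by positivity), ← ENNReal.ofReal_mul (by positivity)]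
        refine ENNReal.ofReal_le_ofReal ?_
        rw [abs_mul, abs_mul, abs_of_pos (exp_pos _), abs_of_pos hs, neg_add_eq_sub]
        calc exp (s - r) * |f s| * s * W = |f s| * (exp (s - r) * s * W) := by ring
          _ ≤ |f s| * (2 ^ (|γ| / 2) * (exp (-(r - s)) * (1 + (r - s) ^ 2) ^ (|γ| / 2)) *
              ((1 + s ^ 2) ^ (γ / 2) * √s)) :=
            mul_le_mul_of_nonneg_left (exp_sub_mul_weight_le γ hs hsr) (abs_nonneg _)
          _ = _ := by ring
    _ ≤ ∫⁻ s, ENNReal.ofReal (2 ^ (|γ| / 2)) *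
          (weightedProfile γ f s * resolventKernel γ (-s + r)) := setLIntegral_le_lintegral _ _
    _ = ENNReal.ofReal (2 ^ (|γ| / 2)) * (weightedProfile γ f ⋆ₗ resolventKernel γ) r :=
        lintegral_const_mul' _ _ ENNReal.ofReal_ne_top

theorem lintegral_radialResolvent_sq_le (γ : ℝ) {f : ℝ → ℝ} (hf : Measurable f) :
    ∫⁻ r in Ioi (0:ℝ), ENNReal.ofReal (radialResolvent f r ^ 2 * (1 + r ^ 2) ^ γ * r) ≤
      ENNReal.ofReal (2 ^ (|γ| / 2) * (∫⁻ z, resolventKernel γ z).toReal) ^ 2 *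
        ∫⁻ r in Ioi 0, ENNReal.ofReal (f r ^ 2 * (1 + r ^ 2) ^ γ * r) := by
  set g := weightedProfile γ f ⋆ₗ resolventKernel γ
  calc ∫⁻ r in Ioi (0:ℝ), ENNReal.ofReal (radialResolvent f r ^ 2 * (1 + r ^ 2) ^ γ * r)
      ≤ ∫⁻ r in Ioi 0, (ENNReal.ofReal (2 ^ (|γ| / 2)) * g r) ^ 2 :=
        setLIntegral_mono' measurableSet_Ioi fun r hr => ofReal_radialResolvent_sq_le γ f hr
    _ ≤ ∫⁻ r, (ENNReal.ofReal (2 ^ (|γ| / 2)) * g r) ^ 2 := setLIntegral_le_lintegral _ _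
    _ = ENNReal.ofReal (2 ^ (|γ| / 2)) ^ 2 * ∫⁻ r, g r ^ 2 := by
        simp_rw [mul_pow]
        exact lintegral_const_mul' _ _ (by finiteness)
    _ ≤ ENNReal.ofReal (2 ^ (|γ| / 2)) ^ 2 *
          ((∫⁻ z, resolventKernel γ z) ^ 2 * ∫⁻ s, weightedProfile γ f s ^ 2) := by
        gcongr
        exact lintegral_lconvolution_sq_le (measurable_weightedProfile γ hf)
          (measurable_resolventKernel γ)
    _ = _ := by
        rw [lintegral_weightedProfile_sq, ENNReal.ofReal_mul (by positivity),
          ENNReal.ofReal_toReal (lintegral_resolventKernel_lt_top γ).ne]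
        ring

/-- Weighted L² bound away from the unit ball for the resolvent
u(r) = (1/r)∫₀^r e^{s-r} f(s) s ds. -/
theorem stmt16 (γ : ℝ) :
    ∃ C > 0, ∀ f : ℝ → ℝ, Measurable f →
      IntegrableOn (fun r => (f r) ^ 2 * (1 + r ^ 2) ^ γ * r) (Set.Ioi 0) →
      Real.sqrt (∫ r in Set.Ioi (1:ℝ),
          ((1 / r) * ∫ s in (0:ℝ)..r, Real.exp (s - r) * f s * s) ^ 2 *
            (1 + r ^ 2) ^ γ * r) ≤
        C * Real.sqrt (∫ r in Set.Ioi (0:ℝ), (f r) ^ 2 * (1 + r ^ 2) ^ γ * r) := by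
  set c := 2 ^ (|γ| / 2) * (∫⁻ z, resolventKernel γ z).toReal
  refine ⟨c + 1, by positivity, fun f hf hint => ?_⟩
  have hLHS : 0 ≤ᵐ[volume.restrict (Ioi (1:ℝ))] fun r =>
      radialResolvent f r ^ 2 * (1 + r ^ 2) ^ γ * r := by
    filter_upwards [ae_restrict_mem measurableSet_Ioi] with r (hr : 1 < r)
    have : 0 < r := by linarith
    positivity
  have hRHS : 0 ≤ᵐ[volume.restrict (Ioi 0)] fun r => f r ^ 2 * (1 + r ^ 2) ^ γ * r := by
    filter_upwards [ae_restrict_mem measurableSet_Ioi] with r (hr : 0 < r)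
    positivity
  have hbound := (lintegral_mono_set (Ioi_subset_Ioi zero_le_one)).trans
    (lintegral_radialResolvent_sq_le γ hf)
  calc _ ≤ c * √(∫ r in Ioi 0, f r ^ 2 * (1 + r ^ 2) ^ γ * r) :=
        sqrt_integral_le_mul_sqrt_integral hLHS hRHS hint (by positivity) hbound
    _ ≤ _ := by gcongr; linarith
end
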